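/- If {s_1, …, s_r} ⊆ {−1,1}^n is a Schur independent family of sign vectors, then conv{s_1 s_1^T, …, s_r s_r^T} is a simplicial face of the elliptope E_n. -/

import Mathlib

open Matrix

noncomputable section

/-- A sign vector: every entry is `1` or `-1`. -/
def IsSignVec {n : ℕ} (s : Fin n → ℝ) : Prop := ∀ k, s k = 1 ∨ s k = -1

/-- Schur independence of a family of vectors: the all-ones vector together with the
entrywise (Schur) products `s i ⊙ s j` for `i < j` form a linearly independent family. -/
def SchurIndependent {n r : ℕ} (s : Fin r → Fin n → ℝ) : Prop :=
  LinearIndependent ℝ (fun p : Option {q : Fin r × Fin r // q.1 < q.2} =>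
    p.elim (fun _ : Fin n => (1 : ℝ)) (fun q k => s q.1.1 k * s q.1.2 k))

/-- The elliptope: positive-semidefinite matrices with unit diagonal (correlation matrices). -/
def elliptope (n : ℕ) : Set (Matrix (Fin n) (Fin n) ℝ) :=
  {A | A.PosSemidef ∧ ∀ i, A i i = 1}

/-- A face of a convex set `K`: a convex subset `F ⊆ K` such that whenever a point of `F`
is a proper convex combination of two points of `K`, both points lie in `F`. -/
def IsFace {V : Type*} [AddCommGroup V] [Module ℝ V] (K F : Set V) : Prop :=
  F ⊆ K ∧ Convex ℝ F ∧
    ∀ x ∈ K, ∀ y ∈ K, ∀ τ : ℝ, 0 < τ → τ < 1 → τ • x + (1 - τ) • y ∈ F → x ∈ F ∧ y ∈ F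

/-- A simplicial face: a face that is the convex hull of a finite affinely independent set. -/
def IsSimplicialFace {V : Type*} [AddCommGroup V] [Module ℝ V] (K F : Set V) : Prop :=
  IsFace K F ∧ ∃ t : Finset V,
    AffineIndependent ℝ (Subtype.val : {x : V // x ∈ t} → V) ∧ F = convexHull ℝ (t : Set V)

/-! Let `T` be the matrix with rows `s i`. Every point of `F = conv {s i s iᵀ}` kills `ker T`, and
by positive semidefiniteness so does every point of the elliptope entering a proper convex
combination that lands in `F`. Such a point is `Tᵀ A T` with `A ⪰ 0`, and its unit diagonal reads
`(tr A) 𝟙 + ∑_{i<j} 2 A i j (s i ⊙ s j) = 𝟙`, so Schur independence forces `A` to be diagonal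
with trace one, i.e. the point lies in `F`. The same independence makes the `s i`, hence the
`s i s iᵀ`, linearly independent, so `F` is a simplex. -/

open Finset

theorem Finset.sum_sum_eq_sum_diag_add_sum_lt {ι M : Type*} [Fintype ι] [LinearOrder ι]
    [AddCommMonoid M] (f : ι → ι → M) :
    ∑ i, ∑ j, f i j =
      ∑ i, f i i + ∑ q : {q : ι × ι // q.1 < q.2}, (f q.1.1 q.1.2 + f q.1.2 q.1.1) := by
  have hswap : ∑ q : {q : ι × ι // q.1 < q.2}, f q.1.2 q.1.1 =
      ∑ q : {q : ι × ι // q.2 < q.1}, f q.1.1 q.1.2 :=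
    Fintype.sum_equiv ((Equiv.prodComm ι ι).subtypeEquiv (q := fun q => q.2 < q.1)
      fun _ => Iff.rfl) (fun q => f q.1.2 q.1.1) (fun q => f q.1.1 q.1.2) fun _ => rfl
  have htri : ∀ q : ι × ι, f q.1 q.2 = (if q.1 < q.2 then f q.1 q.2 else 0) +
      ((if q.1 = q.2 then f q.1 q.2 else 0) + if q.2 < q.1 then f q.1 q.2 else 0) := by
    intro q
    rcases lt_trichotomy q.1 q.2 with h | h | h
    · simp [h, h.ne, h.not_gt]
    · simp [h]
    · simp [h, h.ne', h.not_gt]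
  have hdiag : ∑ q : ι × ι, (if q.1 = q.2 then f q.1 q.2 else 0) = ∑ i, f i i := by
    simp [Fintype.sum_prod_type]
  rw [sum_add_distrib, hswap, ← Fintype.sum_prod_type', Fintype.sum_congr _ _ htri,
    sum_add_distrib, sum_add_distrib, hdiag, ← sum_filter, ← sum_filter,
    sum_subtype _ mem_filter_univ, sum_subtype _ mem_filter_univ,
    add_left_comm]

theorem Matrix.exists_mul_eq_one_of_linearIndependent_row {m l K : Type*} [Field K] [Fintype m]
    [Fintype l] [DecidableEq m] {M : Matrix m l K} (h : LinearIndependent K M.row) :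
    ∃ B : Matrix l m K, M * B = 1 := by
  rw [← mulVec_surjective_iff_exists_right_inverse, ← Matrix.coe_mulVecLin,
    ← LinearMap.range_eq_top]
  apply Submodule.eq_top_of_finrank_eq
  rw [← Matrix.rank, h.rank_matrix, Module.finrank_fintype_fun_eq_card]

theorem Matrix.eq_transpose_mul_mul_of_mulVec_eq_zero {m l R : Type*} [CommRing R] [Fintype m]
    [Fintype l] [DecidableEq m] {T : Matrix m l R} {B : Matrix l m R} (hTB : T * B = 1)
    {X : Matrix l l R} (hX : X.IsSymm) (h : ∀ v, T *ᵥ v = 0 → X *ᵥ v = 0) :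
    X = Tᵀ * (Bᵀ * X * B) * T := by
  have hXBT : X * B * T = X := by
    refine ext_iff_mulVec.mpr fun v => ?_
    have hker : T *ᵥ (v - B *ᵥ T *ᵥ v) = 0 := by
      rw [mulVec_sub, mulVec_mulVec, hTB, one_mulVec, sub_self]
    have := h _ hker
    rw [mulVec_sub, sub_eq_zero] at this
    rw [← mulVec_mulVec, ← mulVec_mulVec, ← this]
  have hTBX : Tᵀ * Bᵀ * X = X := by
    rw [← transpose_mul, ← hX.eq, ← transpose_mul, ← Matrix.mul_assoc, hXBT]
  calc X = Tᵀ * Bᵀ * (X * B * T) := by rw [hXBT, hTBX]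
    _ = Tᵀ * (Bᵀ * X * B) * T := by simp only [Matrix.mul_assoc]

open scoped ComplexOrder in
theorem Matrix.PosSemidef.mulVec_eq_zero_of_add_mulVec_eq_zero {m 𝕜 : Type*} [Fintype m]
    [RCLike 𝕜] {A B : Matrix m m 𝕜} (hA : A.PosSemidef) (hB : B.PosSemidef) {v : m → 𝕜}
    (h : (A + B) *ᵥ v = 0) : A *ᵥ v = 0 := by
  rw [← hA.dotProduct_mulVec_zero_iff]
  have hsum : star v ⬝ᵥ A *ᵥ v + star v ⬝ᵥ B *ᵥ v = 0 := by
    rw [← dotProduct_add, ← add_mulVec, h, dotProduct_zero]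
  exact ((add_eq_zero_iff_of_nonneg (hA.dotProduct_mulVec_nonneg v)
    (hB.dotProduct_mulVec_nonneg v)).mp hsum).1

theorem Matrix.transpose_of_mul_diagonal_mul_of {m l α : Type*} [Fintype m]
    [DecidableEq m] [CommSemiring α] (v : m → l → α) (d : m → α) :
    (of v)ᵀ * diagonal d * of v = ∑ i, d i • vecMulVec (v i) (v i) := by
  ext k j
  simp [mul_apply, diagonal, vecMulVec_apply, Matrix.sum_apply, mul_assoc, mul_left_comm]

theorem convex_elliptope (n : ℕ) : Convex ℝ (elliptope n) := by
  intro X hX Y hY a b ha hb hab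
  refine ⟨(hX.1.smul ha).add (hY.1.smul hb), fun k => ?_⟩
  simp [hX.2 k, hY.2 k, hab]

theorem IsSignVec.mul_self {n : ℕ} {s : Fin n → ℝ} (hs : IsSignVec s) (k : Fin n) :
    s k * s k = 1 := by
  rcases hs k with h | h <;> simp [h]

theorem IsSignVec.vecMulVec_self_mem_elliptope {n : ℕ} {s : Fin n → ℝ} (hs : IsSignVec s) :
    vecMulVec s s ∈ elliptope n := by
  refine ⟨?_, fun k => hs.mul_self k⟩
  simpa using posSemidef_vecMulVec_self_star s

section

variable {n r : ℕ} {s : Fin r → Fin n → ℝ}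

theorem mulVec_eq_zero_of_mem_convexHull {M : Matrix (Fin n) (Fin n) ℝ}
    (hM : M ∈ convexHull ℝ (Set.range fun i => vecMulVec (s i) (s i))) {v : Fin n → ℝ}
    (hv : of s *ᵥ v = 0) : M *ᵥ v = 0 := by
  have hconv : Convex ℝ {M : Matrix (Fin n) (Fin n) ℝ | M *ᵥ v = 0} := by
    intro X hX Y hY a b _ _ _
    simp_all [add_mulVec, smul_mulVec]
  refine convexHull_min ?_ hconv hM
  rintro _ ⟨i, rfl⟩
  have hi : s i ⬝ᵥ v = 0 := congrFun hv i
  simp [vecMulVec_mulVec, hi]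

theorem SchurIndependent.trace_eq_and_add_eq_zero (hschur : SchurIndependent s)
    (hs : ∀ i, IsSignVec (s i)) {A : Matrix (Fin r) (Fin r) ℝ} {c : ℝ}
    (hA : ∀ k, ((of s)ᵀ * A * of s) k k = c) :
    A.trace = c ∧ ∀ i j, i < j → A i j + A j i = 0 := by
  have h := Fintype.linearIndependent_iff.mp hschur
    (fun p => p.elim (A.trace - c) fun q => A q.1.1 q.1.2 + A q.1.2 q.1.1) ?_
  · exact ⟨sub_eq_zero.mp (h none), fun i j hij => h (some ⟨(i, j), hij⟩)⟩
  funext k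
  have hk : ∑ i, ∑ j, A i j * (s i k * s j k) = c := by
    rw [← hA k]
    simp only [mul_apply, transpose_apply, of_apply, sum_mul]
    rw [sum_comm]
    exact sum_congr rfl fun i _ => sum_congr rfl fun j _ => by ring
  rw [sum_sum_eq_sum_diag_add_sum_lt] at hk
  simp only [(hs _).mul_self, mul_one] at hk
  simp only [Fintype.sum_option, Option.elim, Matrix.trace, diag_apply, Finset.sum_apply,
    Pi.smul_apply, smul_eq_mul, mul_one, Pi.zero_apply]
  rw [← hk, sub_add_eq_add_sub, sub_eq_zero, add_right_inj]
  exact sum_congr rfl fun q _ => by ring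

theorem SchurIndependent.linearIndependent (hschur : SchurIndependent s)
    (hs : ∀ i, IsSignVec (s i)) : LinearIndependent ℝ s := by
  refine Fintype.linearIndependent_iff.mpr fun g hg j => ?_
  -- `Tᵀ (g ⊗ eⱼ) T = (∑ i, g i • s i) ⊗ s j = 0`, while `tr (g ⊗ eⱼ) = g j`.
  have hTg : (of s)ᵀ *ᵥ g = 0 := by
    rw [← hg]; ext k; simp [mulVec, dotProduct, Finset.sum_apply, mul_comm]
  have h := (hschur.trace_eq_and_add_eq_zero hs (A := vecMulVec g (Pi.single j 1)) (c := 0)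
    fun k => by rw [mul_vecMulVec, hTg, vecMulVec_mul]; simp).1
  simpa [Matrix.trace, vecMulVec_apply, Pi.single_apply] using h

theorem SchurIndependent.exists_mul_eq_one (hschur : SchurIndependent s)
    (hs : ∀ i, IsSignVec (s i)) : ∃ B : Matrix (Fin n) (Fin r) ℝ, of s * B = 1 :=
  exists_mul_eq_one_of_linearIndependent_row (hschur.linearIndependent hs)

theorem SchurIndependent.linearIndependent_vecMulVec (hschur : SchurIndependent s)
    (hs : ∀ i, IsSignVec (s i)) : LinearIndependent ℝ fun i => vecMulVec (s i) (s i) := by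
  obtain ⟨B, hB⟩ := hschur.exists_mul_eq_one hs
  refine Fintype.linearIndependent_iff.mpr fun g hg j => ?_
  have hBT : Bᵀ * (of s)ᵀ = 1 := by rw [← transpose_mul, hB, transpose_one]
  have h : diagonal g = 0 := calc
    diagonal g = Bᵀ * (of s)ᵀ * diagonal g * (of s * B) := by rw [hBT, hB, one_mul, mul_one]
    _ = Bᵀ * ((of s)ᵀ * diagonal g * of s) * B := by simp only [Matrix.mul_assoc]
    _ = 0 := by rw [transpose_of_mul_diagonal_mul_of]; simp [hg]
  simpa using congrFun (congrFun h j) j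

theorem SchurIndependent.mem_convexHull (hschur : SchurIndependent s)
    (hs : ∀ i, IsSignVec (s i)) {X : Matrix (Fin n) (Fin n) ℝ} (hX : X ∈ elliptope n)
    (hker : ∀ v, of s *ᵥ v = 0 → X *ᵥ v = 0) :
    X ∈ convexHull ℝ (Set.range fun i => vecMulVec (s i) (s i)) := by
  obtain ⟨B, hB⟩ := hschur.exists_mul_eq_one hs
  set A := Bᵀ * X * B
  have hXA : X = (of s)ᵀ * A * of s :=
    eq_transpose_mul_mul_of_mulVec_eq_zero hB hX.1.isHermitian hker
  have hApsd : A.PosSemidef := by simpa using hX.1.conjTranspose_mul_mul_same B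
  obtain ⟨htr, hoff⟩ := hschur.trace_eq_and_add_eq_zero hs (c := 1) fun k => hXA ▸ hX.2 k
  have hsymm (i j : Fin r) : A j i = A i j := by simpa using hApsd.isHermitian.apply i j
  have hdiag : A = diagonal A.diag := by
    ext i j
    rcases lt_trichotomy i j with h | rfl | h
    · rw [diagonal_apply_ne _ h.ne]; linarith [hoff i j h, hsymm i j]
    · simp
    · rw [diagonal_apply_ne _ h.ne']; linarith [hoff j i h, hsymm j i]
  have hXsum : X = ∑ i, A i i • vecMulVec (s i) (s i) := calc
    X = (of s)ᵀ * diagonal A.diag * of s := by rw [← hdiag]; exact hXA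
    _ = ∑ i, A i i • vecMulVec (s i) (s i) := transpose_of_mul_diagonal_mul_of _ _
  rw [hXsum]
  exact (convex_convexHull ℝ _).sum_mem (fun i _ => hApsd.diag_nonneg) htr
    fun i _ => subset_convexHull ℝ _ ⟨i, rfl⟩

theorem SchurIndependent.isFace_convexHull (hschur : SchurIndependent s)
    (hs : ∀ i, IsSignVec (s i)) :
    IsFace (elliptope n) (convexHull ℝ (Set.range fun i => vecMulVec (s i) (s i))) := by
  refine ⟨convexHull_min (Set.range_subset_iff.mpr fun i => (hs i).vecMulVec_self_mem_elliptope)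
    (convex_elliptope n), convex_convexHull ℝ _, fun x hx y hy τ hτ0 hτ1 hmem => ?_⟩
  have hx' := hx.1.smul hτ0.le
  have hy' := hy.1.smul (sub_nonneg.mpr hτ1.le)
  refine ⟨hschur.mem_convexHull hs hx fun v hv => ?_, hschur.mem_convexHull hs hy fun v hv => ?_⟩
  · have := hx'.mulVec_eq_zero_of_add_mulVec_eq_zero hy' (mulVec_eq_zero_of_mem_convexHull hmem hv)
    simpa [smul_mulVec, hτ0.ne'] using this
  · rw [add_comm] at hmem
    have := hy'.mulVec_eq_zero_of_add_mulVec_eq_zero hx' (mulVec_eq_zero_of_mem_convexHull hmem hv)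
    simpa [smul_mulVec, (sub_pos.mpr hτ1).ne'] using this

end

/-- the convex hull of the rank-one sign matrices generated by a Schur independent
family of sign vectors is a simplicial face of the elliptope. -/
theorem simplicialFace_of_schurIndependent {n r : ℕ}
    (s : Fin r → Fin n → ℝ) (hs : ∀ i, IsSignVec (s i))
    (hschur : SchurIndependent s) :
    IsSimplicialFace (elliptope n)
      (convexHull ℝ {M | ∃ i, M = vecMulVec (s i) (s i)}) := by
  have hgen : {M | ∃ i, M = vecMulVec (s i) (s i)} = Set.range fun i => vecMulVec (s i) (s i) :=
    Set.ext fun _ => exists_congr fun _ => eq_comm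
  rw [hgen]
  refine ⟨hschur.isFace_convexHull hs, Finset.univ.image fun i => vecMulVec (s i) (s i), ?_,
    by simp⟩
  exact (hschur.linearIndependent_vecMulVec hs).affineIndependent.range.mono (by simp)
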